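/- For every integer n ≥ 1, D^{n}(y) = ∑_{k=0}^{n} Q_{n+1,k}(−1) · y^{n+1+k} · w^{n}, as an identity in the polynomial ring R = ℚ[a,x,y,w], where Q_{n+1,k}(−1) ∈ ℚ denotes the evaluation of the polynomial Q_{n+1,k} at −1. -/

import Mathlib

/-!
On monomials the grammar acts by `D (y ^ a * w ^ b) = (a * y + b) * y ^ (a + 1) * w ^ (b + 1)`.
Hence `D` sends `∑ₖ cₖ y ^ (n + 1 + k) w ^ n` to
`∑ₖ (n cₖ + (n + k) cₖ₋₁) y ^ (n + 2 + k) w ^ (n + 1)`, which is Shor's recurrence at `x = -1`.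
Induction on `n`, starting from `D⁰ y = y = Q₁,₀(-1) y`, gives the formula.
-/

open Polynomial

/-- The Ramanujan–Shor polynomials `Q n k ∈ ℚ[x]`. -/
noncomputable def ramanujanShorQ : ℕ → ℤ → Polynomial ℚ
  | 0, _ => 0
  | 1, k => if k = 0 then 1 else 0
  | (n + 2), k =>
      if 0 ≤ k ∧ k ≤ (n : ℤ) + 1 then
        (Polynomial.X + Polynomial.C ((n : ℚ) + 1)) * ramanujanShorQ (n + 1) k
          + Polynomial.C (((n : ℤ) + k : ℤ) : ℚ) * ramanujanShorQ (n + 1) (k - 1)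
      else 0

theorem ramanujanShorQ_of_neg : ∀ (n : ℕ) {k : ℤ}, k < 0 → ramanujanShorQ n k = 0
  | 0, _, _ => rfl
  | 1, k, hk => by rw [ramanujanShorQ, if_neg (by omega)]
  | n + 2, k, hk => by rw [ramanujanShorQ, if_neg (by omega)]

theorem ramanujanShorQ_of_le : ∀ (n : ℕ) {k : ℤ}, (n : ℤ) ≤ k → ramanujanShorQ n k = 0
  | 0, _, _ => rfl
  | 1, k, hk => by rw [ramanujanShorQ, if_neg (by omega)]
  | n + 2, k, hk => by rw [ramanujanShorQ, if_neg (by push_cast at hk; omega)]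

/-- Outside `0 ≤ k ≤ n + 1` all three terms vanish, so the recurrence holds for every `k : ℤ`. -/
theorem ramanujanShorQ_add_two (n : ℕ) (k : ℤ) :
    ramanujanShorQ (n + 2) k =
      (X + C ((n : ℚ) + 1)) * ramanujanShorQ (n + 1) k
        + C (((n : ℤ) + k : ℤ) : ℚ) * ramanujanShorQ (n + 1) (k - 1) := by
  rw [ramanujanShorQ]
  split_ifs with hk
  · rfl
  · rcases not_and_or.mp hk with hk | hk
    · rw [ramanujanShorQ_of_neg _ (by omega), ramanujanShorQ_of_neg _ (by omega)]; simp
    · rw [ramanujanShorQ_of_le _ (by push_cast; omega),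
        ramanujanShorQ_of_le _ (by push_cast; omega)]
      simp

theorem Derivation.leibniz_pow_mul_pow {R A : Type*} [CommSemiring R] [CommSemiring A]
    [Algebra R A] (D : Derivation R A A) {y w : A} (hy : D y = y ^ 3 * w)
    (hw : D w = y * w ^ 2) (a b : ℕ) :
    D (y ^ a * w ^ b) = ((a : A) * y + b) * y ^ (a + 1) * w ^ (b + 1) := by
  rw [D.leibniz, D.leibniz_pow, D.leibniz_pow, hy, hw]
  rcases a with _ | a <;> rcases b with _ | b <;> simp <;> ring

section RamanujanShorSum

open Finset

variable {A : Type*} [CommRing A] [Algebra ℚ A] (D : Derivation ℚ A A) {y w : A}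

theorem Derivation.apply_sum_pow_mul_pow (hy : D y = y ^ 3 * w) (hw : D w = y * w ^ 2) (n : ℕ)
    (c : ℤ → ℚ) (hc_neg : c (-1) = 0) (hc_top : c (n + 1) = 0) :
    D (∑ k ∈ range (n + 1), algebraMap ℚ A (c k) * y ^ (n + 1 + k) * w ^ n) =
      ∑ k ∈ range (n + 2), algebraMap ℚ A (n * c k + (n + k : ℕ) * c (k - 1))
        * y ^ (n + 2 + k) * w ^ (n + 1) := by
  -- the second summand is written as the `(k + 1)`-st term of the `(n + k) cₖ₋₁` part
  have hD (k : ℕ) : D (algebraMap ℚ A (c k) * y ^ (n + 1 + k) * w ^ n) =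
      algebraMap ℚ A (n * c k) * y ^ (n + 2 + k) * w ^ (n + 1)
        + algebraMap ℚ A ((n + (k + 1) : ℕ) * c (k + 1 - 1))
          * y ^ (n + 2 + (k + 1)) * w ^ (n + 1) := by
    rw [mul_assoc, ← Algebra.smul_def, D.map_smul, D.leibniz_pow_mul_pow hy hw, Algebra.smul_def]
    simp only [add_sub_cancel_right, map_mul, _root_.map_natCast]
    push_cast
    ring
  simp_rw [map_sum, hD, sum_add_distrib, map_add, add_mul, sum_add_distrib]
  rw [sum_range_succ _ (n + 1), sum_range_succ' _ (n + 1)]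
  simp [hc_neg, hc_top]

theorem Derivation.iterate_apply_eq_sum_ramanujanShorQ (hy : D y = y ^ 3 * w)
    (hw : D w = y * w ^ 2) (n : ℕ) :
    D^[n] y = ∑ k ∈ range (n + 1),
        algebraMap ℚ A ((ramanujanShorQ (n + 1) k).eval (-1)) * y ^ (n + 1 + k) * w ^ n := by
  induction n with
  | zero => simp [ramanujanShorQ]
  | succ n ih =>
    rw [Function.iterate_succ_apply', ih]
    refine (D.apply_sum_pow_mul_pow hy hw n (fun k ↦ (ramanujanShorQ (n + 1) k).eval (-1))
      (by simp [ramanujanShorQ_of_neg]) (by simp [ramanujanShorQ_of_le])).trans ?_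
    simp [ramanujanShorQ_add_two, add_assoc]

end RamanujanShorSum

open MvPolynomial in
theorem dn_y_general (D : Derivation ℚ (MvPolynomial (Fin 4) ℚ) (MvPolynomial (Fin 4) ℚ))
    (hDy : D (X 2) = (X 2) ^ 3 * X 3)
    (hDw : D (X 3) = X 2 * (X 3) ^ 2)
    (n : ℕ) :
    (⇑D)^[n] (X 2)
      = ∑ k ∈ Finset.range (n + 1),
          MvPolynomial.C (Polynomial.eval (-1) (ramanujanShorQ (n + 1) (k : ℤ)))
            * (X 2) ^ (n + 1 + k) * (X 3) ^ n := by
  simpa only [MvPolynomial.algebraMap_eq] using D.iterate_apply_eq_sum_ramanujanShorQ hDy hDw n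

open MvPolynomial in
theorem dn_y (D : Derivation ℚ (MvPolynomial (Fin 4) ℚ) (MvPolynomial (Fin 4) ℚ))
    (hDa : D (X 0) = X 0 * X 1 * X 2)
    (hDx : D (X 1) = X 1 * X 2 * X 3)
    (hDy : D (X 2) = (X 2) ^ 3 * X 3)
    (hDw : D (X 3) = X 2 * (X 3) ^ 2)
    (n : ℕ) (hn : 1 ≤ n) :
    (⇑D)^[n] (X 2)
      = ∑ k ∈ Finset.range (n + 1),
          MvPolynomial.C (Polynomial.eval (-1) (ramanujanShorQ (n + 1) (k : ℤ)))
            * (X 2) ^ (n + 1 + k) * (X 3) ^ n :=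
  dn_y_general D hDy hDw n
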